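/- Let G be a connected finite graph with loops, cyclomatic number k, and spanning tree T. Suppose that among the k edges in E(G) \ E(T), exactly s join two vertices that both have opinion +1 under the optimal opinion function of the intermediate graph at the time the edge is added, and the remaining l = k - s edges have at least one endpoint of opinion -1. Then γ(T) - 4k ≤ γ(G) ≤ γ(T) + 2l. -/
import Mathlib

open scoped Classical
open Finset

/-- Sum of opinions over the closed neighborhood of `v` (closed since every
vertex has a loop, so `v` itself is counted). -/
noncomputable def nbrSum {V : Type*} [Fintype V] (G : SimpleGraph V) (f : V → ℤ) (v : V) : ℤ :=
  ∑ w ∈ univ.filter (fun w => G.Adj v w ∨ w = v), f w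

/-- `f` is an opinion function: every value is `1` or `-1`. -/
def IsOpinion {V : Type*} (f : V → ℤ) : Prop := ∀ v, f v = 1 ∨ f v = -1

/-- The set of vertices voting 'yes'. -/
noncomputable def yesVoters {V : Type*} [Fintype V] (G : SimpleGraph V) (f : V → ℤ) : Finset V :=
  univ.filter (fun v => 0 < nbrSum G f v)

/-- `f` is strictly majoritarian on `G`: more than `|V|/2` vertices vote 'yes'. -/
def Majoritarian {V : Type*} [Fintype V] (G : SimpleGraph V) (f : V → ℤ) : Prop :=
  Fintype.card V < 2 * (yesVoters G f).card

/-- The strict domination number: minimum of `f(V)` over strictly majoritarian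
opinion functions. -/
noncomputable def gamma {V : Type*} [Fintype V] (G : SimpleGraph V) : ℤ :=
  sInf {t : ℤ | ∃ f : V → ℤ, IsOpinion f ∧ Majoritarian G f ∧ t = ∑ v, f v}

section Helpers
variable {V : Type*} [Fintype V]

set_option linter.unusedSectionVars false

noncomputable def nbrTerm (G : SimpleGraph V) (f : V → ℤ) (v w : V) : ℤ :=
  if G.Adj v w ∨ w = v then f w else 0

lemma ite_inst {α : Sort*} {p : Prop} {h1 h2 : Decidable p} (x y : α) :
    @ite _ p h1 x y = @ite _ p h2 x y := by
  cases Subsingleton.elim h1 h2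
  rfl

lemma nbrTerm_pos {G : SimpleGraph V} {f : V → ℤ} {v w : V}
    (h : G.Adj v w ∨ w = v) : nbrTerm G f v w = f w := by
  unfold nbrTerm; rw [if_pos h]

lemma nbrTerm_neg {G : SimpleGraph V} {f : V → ℤ} {v w : V}
    (h : ¬ (G.Adj v w ∨ w = v)) : nbrTerm G f v w = 0 := by
  unfold nbrTerm; rw [if_neg h]

lemma nbrSum_ite (G : SimpleGraph V) (f : V → ℤ) (v : V) :
    nbrSum G f v = ∑ w : V, nbrTerm G f v w := by
  unfold nbrSum
  rw [Finset.sum_filter]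
  exact Finset.sum_congr rfl fun w _ => ite_inst _ _

lemma sum_ite_single (b : V) (g : V → ℤ) :
    ∑ w : V, (if w = b then g w else 0) = g b := by
  rw [Finset.sum_eq_single b]
  · rw [if_pos rfl]
  · intro w _ hw; rw [if_neg hw]
  · intro h; exact absurd (mem_univ b) h

lemma opinion_le {f : V → ℤ} (hf : IsOpinion f) (v : V) : f v ≤ 1 := by
  rcases hf v with h | h <;> simp [h]

lemma opinion_ge {f : V → ℤ} (hf : IsOpinion f) (v : V) : -1 ≤ f v := by
  rcases hf v with h | h <;> simp [h]

lemma nbrSum_ge_one (G : SimpleGraph V) {f : V → ℤ} (v : V)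
    (h1 : ∀ w, G.Adj v w ∨ w = v → f w = 1) : 1 ≤ nbrSum G f v := by
  rw [nbrSum_ite]
  have key : ∀ w : V, (if w = v then (1:ℤ) else 0) ≤ nbrTerm G f v w := by
    intro w
    by_cases hw : w = v
    · rw [if_pos hw, nbrTerm_pos (Or.inr hw), h1 w (Or.inr hw)]
    · rw [if_neg hw]
      by_cases hc : G.Adj v w ∨ w = v
      · rw [nbrTerm_pos hc, h1 w hc]; norm_num
      · rw [nbrTerm_neg hc]
  calc (1:ℤ) = ∑ w : V, if w = v then (1:ℤ) else 0 := (sum_ite_single v (fun _ => 1)).symm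
    _ ≤ _ := Finset.sum_le_sum fun w _ => key w

lemma gammaSet_bddBelow (G : SimpleGraph V) :
    BddBelow {t : ℤ | ∃ f : V → ℤ, IsOpinion f ∧ Majoritarian G f ∧ t = ∑ v, f v} := by
  refine ⟨-(Fintype.card V : ℤ), ?_⟩
  rintro t ⟨f, hf, -, rfl⟩
  have h : ∑ _v : V, (-1 : ℤ) ≤ ∑ v, f v := Finset.sum_le_sum fun v _ => opinion_ge hf v
  simpa using h

lemma gammaSet_nonempty [Nonempty V] (G : SimpleGraph V) :
    {t : ℤ | ∃ f : V → ℤ, IsOpinion f ∧ Majoritarian G f ∧ t = ∑ v, f v}.Nonempty := by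
  refine ⟨∑ _v : V, (1 : ℤ), fun _ => 1, fun _ => Or.inl rfl, ?_, rfl⟩
  have hyes : yesVoters G (fun _ => (1:ℤ)) = univ := by
    ext v
    simp only [yesVoters, mem_filter, mem_univ, true_and, iff_true]
    have := nbrSum_ge_one G v (f := fun _ => (1:ℤ)) (fun _ _ => rfl)
    omega
  unfold Majoritarian
  rw [hyes, Finset.card_univ]
  have : 0 < Fintype.card V := Fintype.card_pos
  omega

lemma gamma_le [Nonempty V] (G : SimpleGraph V) {f : V → ℤ} (hf : IsOpinion f)
    (hm : Majoritarian G f) : gamma G ≤ ∑ v, f v :=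
  csInf_le (gammaSet_bddBelow G) ⟨f, hf, hm, rfl⟩

lemma gamma_mem [Nonempty V] (G : SimpleGraph V) :
    ∃ f : V → ℤ, IsOpinion f ∧ Majoritarian G f ∧ gamma G = ∑ v, f v :=
  Int.csInf_mem (gammaSet_nonempty G) (gammaSet_bddBelow G)

lemma nbrSum_mono (G : SimpleGraph V) {f g : V → ℤ} (h : ∀ u, f u ≤ g u) (v : V) :
    nbrSum G f v ≤ nbrSum G g v :=
  Finset.sum_le_sum fun w _ => h w

lemma majoritarian_of_le {G G' : SimpleGraph V} {f g : V → ℤ}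
    (h : ∀ u, 0 < nbrSum G f u → 0 < nbrSum G' g u) (hm : Majoritarian G f) :
    Majoritarian G' g := by
  have hsub : yesVoters G f ⊆ yesVoters G' g := by
    intro u hu
    simp only [yesVoters, mem_filter, mem_univ, true_and] at hu ⊢
    exact h u hu
  unfold Majoritarian at hm ⊢
  have := Finset.card_le_card hsub
  omega

lemma adj_sup_edge {H : SimpleGraph V} {a b x y : V} (hab : a ≠ b) :
    (H ⊔ SimpleGraph.fromEdgeSet {s(a,b)}).Adj x y ↔
      H.Adj x y ∨ (x = a ∧ y = b) ∨ (x = b ∧ y = a) := by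
  simp only [SimpleGraph.sup_adj, SimpleGraph.fromEdgeSet_adj, Set.mem_singleton_iff,
    Sym2.eq_iff]
  constructor
  · rintro (h | ⟨h, -⟩)
    · exact Or.inl h
    · exact Or.inr h
  · rintro (h | h)
    · exact Or.inl h
    · refine Or.inr ⟨h, ?_⟩
      rcases h with ⟨rfl, rfl⟩ | ⟨rfl, rfl⟩
      · exact hab
      · exact hab.symm

lemma nbrSum_sup_edge_of_ne {H : SimpleGraph V} {a b v : V} (hab : a ≠ b)
    (hva : v ≠ a) (hvb : v ≠ b) (f : V → ℤ) :
    nbrSum (H ⊔ SimpleGraph.fromEdgeSet {s(a,b)}) f v = nbrSum H f v := by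
  rw [nbrSum_ite, nbrSum_ite]
  refine Finset.sum_congr rfl fun w _ => ?_
  have hiff : ((H ⊔ SimpleGraph.fromEdgeSet {s(a,b)}).Adj v w ∨ w = v) ↔ (H.Adj v w ∨ w = v) := by
    rw [adj_sup_edge hab]
    constructor
    · rintro ((h | ⟨rfl, rfl⟩ | ⟨rfl, rfl⟩) | h)
      · exact Or.inl h
      · exact absurd rfl hva
      · exact absurd rfl hvb
      · exact Or.inr h
    · tauto
  by_cases hc : H.Adj v w ∨ w = v
  · rw [nbrTerm_pos hc, nbrTerm_pos (hiff.mpr hc)]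
  · rw [nbrTerm_neg hc, nbrTerm_neg (fun h => hc (hiff.mp h))]

lemma nbrSum_sup_edge_left {H : SimpleGraph V} {a b : V} (hab : a ≠ b)
    (hna : ¬ H.Adj a b) (f : V → ℤ) :
    nbrSum (H ⊔ SimpleGraph.fromEdgeSet {s(a,b)}) f a = nbrSum H f a + f b := by
  rw [nbrSum_ite, nbrSum_ite]
  have key : ∀ w : V, nbrTerm (H ⊔ SimpleGraph.fromEdgeSet {s(a,b)}) f a w
      = nbrTerm H f a w + (if w = b then f w else 0) := by
    intro w
    by_cases hwb : w = b
    · subst hwb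
      rw [nbrTerm_pos (Or.inl ((adj_sup_edge hab).mpr (Or.inr (Or.inl ⟨rfl, rfl⟩)))),
        nbrTerm_neg ?_, if_pos rfl, zero_add]
      rintro (h | h)
      · exact hna h
      · exact hab h.symm
    · rw [if_neg hwb, add_zero]
      have hiff : ((H ⊔ SimpleGraph.fromEdgeSet {s(a,b)}).Adj a w ∨ w = a) ↔ (H.Adj a w ∨ w = a) := by
        rw [adj_sup_edge hab]
        constructor
        · rintro ((h | ⟨-, rfl⟩ | ⟨h, -⟩) | h)
          · exact Or.inl h
          · exact absurd rfl hwb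
          · exact absurd h hab
          · exact Or.inr h
        · tauto
      by_cases hc : H.Adj a w ∨ w = a
      · rw [nbrTerm_pos hc, nbrTerm_pos (hiff.mpr hc)]
      · rw [nbrTerm_neg hc, nbrTerm_neg (fun h => hc (hiff.mp h))]
  rw [Finset.sum_congr rfl fun w _ => key w, Finset.sum_add_distrib, sum_ite_single b f]

lemma nbrSum_sup_edge_right {H : SimpleGraph V} {a b : V} (hab : a ≠ b)
    (hna : ¬ H.Adj a b) (f : V → ℤ) :
    nbrSum (H ⊔ SimpleGraph.fromEdgeSet {s(a,b)}) f b = nbrSum H f b + f a := by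
  have h : ({s(a,b)} : Set (Sym2 V)) = {s(b,a)} := by rw [Sym2.eq_swap]
  rw [h]
  exact nbrSum_sup_edge_left hab.symm (fun h' => hna h'.symm) f

lemma sum_update_univ (w : V) (f : V → ℤ) :
    ∑ u : V, Function.update f w (1:ℤ) u = (∑ u : V, f u) + 1 - f w := by
  classical
  rw [Finset.sum_update_of_mem (Finset.mem_univ w)]
  have h : ∑ u : V, f u = ∑ u ∈ univ \ {w}, f u + f w := by
    rw [Finset.sum_eq_sum_sdiff_singleton_add (Finset.mem_univ w) f]
  linarith

lemma nbrSum_update (G : SimpleGraph V) (f : V → ℤ) {v w : V}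
    (hcond : G.Adj v w ∨ w = v) :
    nbrSum G (Function.update f w 1) v = nbrSum G f v + 1 - f w := by
  rw [nbrSum_ite, nbrSum_ite]
  have key : ∀ u : V, nbrTerm G (Function.update f w 1) v u
      = nbrTerm G f v u + (if u = w then 1 - f w else 0) := by
    intro u
    by_cases huw : u = w
    · subst huw
      rw [nbrTerm_pos hcond, nbrTerm_pos hcond, if_pos rfl, Function.update_self]
      ring
    · unfold nbrTerm
      rw [Function.update_of_ne huw, if_neg huw, add_zero]
  rw [Finset.sum_congr rfl fun u _ => key u, Finset.sum_add_distrib,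
    sum_ite_single w (fun _ => 1 - f w)]
  ring

lemma bump (G : SimpleGraph V) {f : V → ℤ} (hf : IsOpinion f) (v : V) :
    ∃ g : V → ℤ, IsOpinion g ∧ (∀ u, f u ≤ g u) ∧ (∑ u, g u) ≤ (∑ u, f u) + 2 ∧
      (0 ≤ nbrSum G f v → 0 < nbrSum G g v) := by
  by_cases h : 0 < nbrSum G f v
  · exact ⟨f, hf, fun _ => le_rfl, by linarith, fun _ => h⟩
  push_neg at h
  have hex : ∃ w, (G.Adj v w ∨ w = v) ∧ f w = -1 := by
    by_contra hc
    push_neg at hc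
    have h1 : ∀ w, (G.Adj v w ∨ w = v) → f w = (1:ℤ) :=
      fun w hw => (hf w).resolve_right (hc w hw)
    have := nbrSum_ge_one G v h1
    omega
  obtain ⟨w, hw, hwv⟩ := hex
  refine ⟨Function.update f w 1, ?_, ?_, ?_, ?_⟩
  · intro u
    by_cases hu : u = w
    · subst hu; simp
    · rw [Function.update_of_ne hu]; exact hf u
  · intro u
    by_cases hu : u = w
    · subst hu; simp [hwv]
    · rw [Function.update_of_ne hu]
  · rw [sum_update_univ w f, hwv]
    omega
  · intro h0
    rw [nbrSum_update G f hw, hwv]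
    omega

lemma step_upper_free [Nonempty V] {H : SimpleGraph V} {a b : V} (hab : a ≠ b)
    (hna : ¬ H.Adj a b) {f : V → ℤ} (hf : IsOpinion f) (hm : Majoritarian H f)
    (ha : f a = 1) (hb : f b = 1) :
    gamma (H ⊔ SimpleGraph.fromEdgeSet {s(a,b)}) ≤ ∑ v, f v := by
  refine gamma_le _ hf (majoritarian_of_le (fun u hu => ?_) hm)
  by_cases hua : u = a
  · subst hua
    rw [nbrSum_sup_edge_left hab hna, hb]
    omega
  by_cases hub : u = b
  · subst hub
    rw [nbrSum_sup_edge_right hab hna, ha]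
    omega
  · rw [nbrSum_sup_edge_of_ne hab hua hub]
    exact hu

lemma step_upper_one_sided [Nonempty V] {H : SimpleGraph V} {a b : V} (hab : a ≠ b)
    (hna : ¬ H.Adj a b) {f : V → ℤ} (hf : IsOpinion f) (hm : Majoritarian H f)
    (hb : f b = -1) :
    gamma (H ⊔ SimpleGraph.fromEdgeSet {s(a,b)}) ≤ (∑ v, f v) + 2 := by
  set g := Function.update f b 1 with hg
  have hgop : IsOpinion g := by
    intro u
    by_cases hu : u = b
    · subst hu; simp [hg]
    · rw [hg, Function.update_of_ne hu]; exact hf u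
  have hfg : ∀ u, f u ≤ g u := by
    intro u
    by_cases hu : u = b
    · subst hu; simp [hg, hb]
    · rw [hg, Function.update_of_ne hu]
  have hsum : ∑ v, g v = (∑ v, f v) + 2 := by
    rw [hg, sum_update_univ b f, hb]; ring
  have hmg : Majoritarian (H ⊔ SimpleGraph.fromEdgeSet {s(a,b)}) g := by
    refine majoritarian_of_le (fun u hu => ?_) hm
    by_cases hua : u = a
    · subst hua
      rw [nbrSum_sup_edge_left hab hna]
      have h1 : nbrSum H f u ≤ nbrSum H g u := nbrSum_mono H hfg u
      have h2 : g b = 1 := by simp [hg]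
      omega
    by_cases hub : u = b
    · subst hub
      rw [nbrSum_sup_edge_right hab hna]
      have h1 : nbrSum H g u = nbrSum H f u + 1 - f u := by
        rw [hg]
        exact nbrSum_update H f (Or.inr rfl)
      have h2 : -1 ≤ g a := opinion_ge hgop a
      have h3 : f u = -1 := hb
      omega
    · rw [nbrSum_sup_edge_of_ne hab hua hub]
      exact lt_of_lt_of_le hu (nbrSum_mono H hfg u)
  calc gamma (H ⊔ SimpleGraph.fromEdgeSet {s(a,b)}) ≤ ∑ v, g v := gamma_le _ hgop hmg
    _ = (∑ v, f v) + 2 := hsum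

lemma step_upper [Nonempty V] {H : SimpleGraph V} {a b : V} (hab : a ≠ b)
    (hna : ¬ H.Adj a b) :
    gamma (H ⊔ SimpleGraph.fromEdgeSet {s(a,b)}) ≤ gamma H + 2 := by
  obtain ⟨f, hf, hm, hsum⟩ := gamma_mem H
  rcases hf b with hb | hb
  · rcases hf a with ha | ha
    · have := step_upper_free hab hna hf hm ha hb
      omega
    · have hswap : ({s(a,b)} : Set (Sym2 V)) = {s(b,a)} := by rw [Sym2.eq_swap]
      rw [hswap]
      have := step_upper_one_sided hab.symm (fun h => hna h.symm) hf hm ha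
      omega
  · have := step_upper_one_sided hab hna hf hm hb
    omega

lemma step_lower [Nonempty V] {H : SimpleGraph V} {a b : V} (hab : a ≠ b)
    (hna : ¬ H.Adj a b) :
    gamma H ≤ gamma (H ⊔ SimpleGraph.fromEdgeSet {s(a,b)}) + 4 := by
  obtain ⟨f, hf, hm, hsum⟩ := gamma_mem (H ⊔ SimpleGraph.fromEdgeSet {s(a,b)})
  obtain ⟨g, hgop, hfg, hgs, hga⟩ := bump H hf a
  obtain ⟨h, hhop, hgh, hhs, hhb⟩ := bump H hgop b
  have hfh : ∀ u, f u ≤ h u := fun u => le_trans (hfg u) (hgh u)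
  have hmaj : Majoritarian H h := by
    refine majoritarian_of_le (fun u hu => ?_) hm
    by_cases hua : u = a
    · subst hua
      rw [nbrSum_sup_edge_left hab hna] at hu
      have h1 : f b ≤ 1 := opinion_le hf b
      have h2 : 0 ≤ nbrSum H f u := by omega
      exact lt_of_lt_of_le (hga h2) (nbrSum_mono H hgh u)
    by_cases hub : u = b
    · subst hub
      rw [nbrSum_sup_edge_right hab hna] at hu
      have h1 : f a ≤ 1 := opinion_le hf a
      have h2 : 0 ≤ nbrSum H f u := by omega
      have h3 : 0 ≤ nbrSum H g u := le_trans h2 (nbrSum_mono H hfg u)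
      exact hhb h3
    · rw [nbrSum_sup_edge_of_ne hab hua hub] at hu
      exact lt_of_lt_of_le hu (nbrSum_mono H hfh u)
  have := gamma_le H hhop hmaj
  omega

end Helpers

theorem stmt14 {V : Type*} [Fintype V] [Nonempty V] (G T : SimpleGraph V) (k sN l : ℕ)
    (hG : G.Connected) (hle : T ≤ G) (hT : T.IsTree)
    (hk : (k : ℤ) = G.edgeFinset.card - Fintype.card V + 1)
    (Gs : Fin (k + 1) → SimpleGraph V) (e : Fin k → V × V)
    (h0 : Gs 0 = T) (hlast : Gs (Fin.last k) = G)
    (hstep : ∀ i : Fin k, (e i).1 ≠ (e i).2 ∧ ¬ (Gs i.castSucc).Adj (e i).1 (e i).2 ∧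
      Gs i.succ = Gs i.castSucc ⊔ SimpleGraph.fromEdgeSet {s((e i).1, (e i).2)})
    (hs : sN = (univ.filter (fun i : Fin k => ∃ f : V → ℤ, IsOpinion f ∧
      Majoritarian (Gs i.castSucc) f ∧ ∑ w, f w = gamma (Gs i.castSucc) ∧
      f (e i).1 = 1 ∧ f (e i).2 = 1)).card)
    (hlk : sN + l = k) :
    gamma T - 4 * k ≤ gamma G ∧ gamma G ≤ gamma T + 2 * l := by
  classical
  set P : Fin k → Prop := fun i => ∃ f : V → ℤ, IsOpinion f ∧
      Majoritarian (Gs i.castSucc) f ∧ ∑ w, f w = gamma (Gs i.castSucc) ∧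
      f (e i).1 = 1 ∧ f (e i).2 = 1 with hP
  have stepU : ∀ i : Fin k, gamma (Gs i.succ) ≤ gamma (Gs i.castSucc) +
      (if P i then 0 else 2) := by
    intro i
    obtain ⟨hne, hnadj, heq⟩ := hstep i
    rw [heq]
    by_cases hp : P i
    · rw [if_pos hp]
      obtain ⟨f, hf, hm, hsum, ha, hb⟩ := hp
      have := step_upper_free hne hnadj hf hm ha hb
      linarith
    · rw [if_neg hp]
      exact step_upper hne hnadj
  have stepL : ∀ i : Fin k, gamma (Gs i.castSucc) - 4 ≤ gamma (Gs i.succ) := by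
    intro i
    obtain ⟨hne, hnadj, heq⟩ := hstep i
    rw [heq]
    have := step_lower hne hnadj
    linarith
  have main : ∀ n : ℕ, ∀ hn : n ≤ k,
      gamma T - 4 * n ≤ gamma (Gs ⟨n, Nat.lt_succ_of_le hn⟩) ∧
      gamma (Gs ⟨n, Nat.lt_succ_of_le hn⟩) ≤ gamma T +
        2 * ((univ.filter (fun i : Fin k => i.val < n ∧ ¬ P i)).card : ℤ) := by
    intro n
    induction n with
    | zero =>
      intro hn
      have hzero : (⟨0, Nat.lt_succ_of_le hn⟩ : Fin (k+1)) = 0 := rfl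
      rw [hzero, h0]
      have hfil : (univ.filter (fun i : Fin k => i.val < 0 ∧ ¬ P i)) = ∅ := by
        ext j; simp
      rw [hfil]
      simp
    | succ m ih =>
      intro hn
      have hm : m ≤ k := Nat.le_of_succ_le hn
      obtain ⟨ihL, ihU⟩ := ih hm
      have hmk : m < k := hn
      set i : Fin k := ⟨m, hmk⟩ with hi
      have hcs : i.castSucc = (⟨m, Nat.lt_succ_of_le hm⟩ : Fin (k+1)) := rfl
      have hsc : i.succ = (⟨m+1, Nat.lt_succ_of_le hn⟩ : Fin (k+1)) := rfl
      have hfil : (univ.filter (fun j : Fin k => j.val < m+1 ∧ ¬ P j)) =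
          if P i then (univ.filter (fun j : Fin k => j.val < m ∧ ¬ P j))
          else insert i (univ.filter (fun j : Fin k => j.val < m ∧ ¬ P j)) := by
        by_cases hp : P i
        · rw [if_pos hp]
          ext j
          simp only [mem_filter, mem_univ, true_and]
          constructor
          · rintro ⟨hj, hnp⟩
            refine ⟨?_, hnp⟩
            rcases Nat.lt_succ_iff_lt_or_eq.mp hj with h | h
            · exact h
            · exact absurd (show P j from (Fin.ext h : j = i) ▸ hp) hnp
          · rintro ⟨hj, hnp⟩
            exact ⟨Nat.lt_succ_of_lt hj, hnp⟩
        · rw [if_neg hp]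
          ext j
          simp only [mem_filter, mem_univ, true_and, mem_insert]
          constructor
          · rintro ⟨hj, hnp⟩
            rcases Nat.lt_succ_iff_lt_or_eq.mp hj with h | h
            · exact Or.inr ⟨h, hnp⟩
            · exact Or.inl (Fin.ext h)
          · rintro (rfl | ⟨hj, hnp⟩)
            · exact ⟨Nat.lt_succ_self m, hp⟩
            · exact ⟨Nat.lt_succ_of_lt hj, hnp⟩
      have hL := stepL i
      have hU := stepU i
      rw [hcs, hsc] at hL hU
      constructor
      · push_cast
        push_cast at ihL
        linarith
      · rw [hfil]
        by_cases hp : P i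
        · rw [if_pos hp]
          rw [if_pos hp] at hU
          linarith
        · rw [if_neg hp]
          rw [if_neg hp] at hU
          have hnotmem : i ∉ (univ.filter (fun j : Fin k => j.val < m ∧ ¬ P j)) := by
            simp only [mem_filter, mem_univ, true_and, not_and]
            intro h
            exact absurd h (lt_irrefl m)
          rw [Finset.card_insert_of_notMem hnotmem]
          push_cast
          linarith
  obtain ⟨hL, hU⟩ := main k le_rfl
  have hlastk : (⟨k, Nat.lt_succ_of_le le_rfl⟩ : Fin (k+1)) = Fin.last k := rfl
  rw [hlastk, hlast] at hL hU
  have hfilk : (univ.filter (fun j : Fin k => j.val < k ∧ ¬ P j)) =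
      univ.filter (fun j : Fin k => ¬ P j) := by
    ext j
    simp [j.isLt]
  rw [hfilk] at hU
  have hcards : (univ.filter (fun j : Fin k => P j)).card +
      (univ.filter (fun j : Fin k => ¬ P j)).card = k := by
    rw [Finset.card_filter_add_card_filter_not]
    simp
  have hsN : sN = (univ.filter (fun j : Fin k => P j)).card := hs
  have hlk' : (univ.filter (fun j : Fin k => P j)).card + l = k := by
    rw [← hsN]; exact hlk
  have hlcard : (univ.filter (fun j : Fin k => ¬ P j)).card = l :=
    Nat.add_left_cancel (hcards.trans hlk'.symm)
  rw [hlcard] at hU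
  exact ⟨hL, hU⟩
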